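/- Let K be a field (possibly finite), A = ⊕_{n∈ℤ} A_n a ℤ-graded associative K-algebra, and I a two-sided ideal of A. Then I is a graded ideal if and only if I is invariant under all base-changed gauge automorphisms, i.e. if and only if for every commutative K-algebra R and every z ∈ R^×, ρ_R(z) maps every element i ⊗ 1 with i ∈ I into the R-submodule of A ⊗_K R spanned by {j ⊗ 1 : j ∈ I}. -/

import Mathlib

/-!
A gauge map sends `i ⊗ 1` to `∑ₙ iₙ ⊗ zⁿ`, which lies in the span of `I ⊗ R` when `I` is graded.
Conversely, take the generic unit `z = T` of `R = K[T;T⁻¹]` (scalars of `K` would not do, as `K`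
may be finite): the coefficient of `Tᵐ` in `ρ(i ⊗ 1)` is `iₘ`, and extracting a coefficient maps
the span of `I ⊗ R` back into `I`.
-/

open TensorProduct

/-- `ρ` is the base-changed gauge automorphism of `A ⊗[K] R` attached to the unit `z ∈ Rˣ`:
the (unique) map satisfying `ρ(aₙ ⊗ r) = aₙ ⊗ zⁿ r` for homogeneous `aₙ` of degree `n`. -/
def IsGaugeMap {K A R : Type} [Field K] [Ring A] [Algebra K A]
    (𝒜 : ℤ → Submodule K A) [CommRing R] [Algebra K R] (z : Rˣ)
    (ρ : A ⊗[K] R →ₗ[K] A ⊗[K] R) : Prop :=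
  ∀ (n : ℤ) (a : A), a ∈ 𝒜 n → ∀ r : R,
    ρ (a ⊗ₜ[K] r) = a ⊗ₜ[K] (((z ^ n : Rˣ) : R) * r)

open DirectSum LaurentPolynomial

namespace LaurentPolynomial

variable (R : Type) [Semiring R]

noncomputable def unitT : R[T;T⁻¹]ˣ :=
  (AddMonoidAlgebra.of R ℤ).toHomUnits (Multiplicative.ofAdd 1)

theorem val_unitT_zpow (n : ℤ) : ((unitT R ^ n : R[T;T⁻¹]ˣ) : R[T;T⁻¹]) = T n := by
  rw [unitT, ← map_zpow, ← ofAdd_zsmul, smul_eq_mul, mul_one]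
  rfl

noncomputable def lcoeff (m : ℤ) : R[T;T⁻¹] →ₗ[R] R :=
  Finsupp.lapply m ∘ₗ (AddMonoidAlgebra.coeffLinearEquiv R).toLinearMap

@[simp]
theorem lcoeff_apply (m : ℤ) (f : R[T;T⁻¹]) : lcoeff R m f = f.coeff m := rfl

end LaurentPolynomial

theorem TensorProduct.rid_lTensor_mem_of_mem_span {K A R : Type} [CommSemiring K]
    [AddCommMonoid A] [Module K A] [AddCommMonoid R] [Module K R]
    (P : Submodule K A) (f : R →ₗ[K] K) {x : A ⊗[K] R}
    (hx : x ∈ Submodule.span K {y | ∃ j ∈ P, ∃ r : R, y = j ⊗ₜ[K] r}) :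
    TensorProduct.rid K A (f.lTensor A x) ∈ P := by
  refine (Submodule.span_le (p := P.comap
    ((TensorProduct.rid K A).toLinearMap ∘ₗ f.lTensor A))).2 ?_ hx
  rintro _ ⟨j, hj, r, rfl⟩
  simpa using P.smul_mem (f r) hj

section Gauge

variable {K A R : Type} [Field K] [Ring A] [Algebra K A] (𝒜 : ℤ → Submodule K A)
  [Decomposition 𝒜] [CommRing R] [Algebra K R]

noncomputable def gaugeCoaction (z : Rˣ) : A →ₗ[K] A ⊗[K] R :=
  toModule K ℤ _ (fun n => (mk K A R).flip ((z ^ n : Rˣ) : R) ∘ₗ (𝒜 n).subtype) ∘ₗ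
    (decomposeLinearEquiv 𝒜).toLinearMap

theorem gaugeCoaction_of_mem (z : Rˣ) {n : ℤ} {a : A} (ha : a ∈ 𝒜 n) :
    gaugeCoaction 𝒜 z a = a ⊗ₜ[K] ((z ^ n : Rˣ) : R) := by
  rw [gaugeCoaction, LinearMap.comp_apply, LinearEquiv.coe_coe, decomposeLinearEquiv_apply,
    decompose_of_mem 𝒜 ha, ← lof_eq_of K, toModule_lof]
  rfl

noncomputable def gaugeMap (z : Rˣ) : A ⊗[K] R →ₗ[K] A ⊗[K] R :=
  (LinearMap.mul' K R).lTensor A ∘ₗ (TensorProduct.assoc K A R R).toLinearMap ∘ₗ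
    (gaugeCoaction 𝒜 z).rTensor R

theorem isGaugeMap_gaugeMap (z : Rˣ) : IsGaugeMap 𝒜 z (gaugeMap 𝒜 z) := by
  intro n a ha r
  simp [gaugeMap, gaugeCoaction_of_mem 𝒜 z ha]

variable {𝒜}

theorem IsGaugeMap.apply_tmul [∀ (n : ℤ) (x : 𝒜 n), Decidable (x ≠ 0)] {z : Rˣ}
    {ρ : A ⊗[K] R →ₗ[K] A ⊗[K] R} (hρ : IsGaugeMap 𝒜 z ρ) (a : A) (r : R) :
    ρ (a ⊗ₜ[K] r) = ∑ n ∈ (decompose 𝒜 a).support,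
      (decompose 𝒜 a n : A) ⊗ₜ[K] (((z ^ n : Rˣ) : R) * r) := by
  conv_lhs => rw [← sum_support_decompose 𝒜 a, sum_tmul, map_sum]
  exact Finset.sum_congr rfl fun n _ => hρ n _ (decompose 𝒜 a n).2 r

theorem IsGaugeMap.rid_lcoeff_apply_tmul_one {ρ : A ⊗[K] K[T;T⁻¹] →ₗ[K] A ⊗[K] K[T;T⁻¹]}
    (hρ : IsGaugeMap 𝒜 (unitT K) ρ) (a : A) (m : ℤ) :
    TensorProduct.rid K A ((lcoeff K m).lTensor A (ρ (a ⊗ₜ[K] 1))) = decompose 𝒜 a m := by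
  classical
  rw [hρ.apply_tmul, map_sum, map_sum]
  simp only [mul_one, val_unitT_zpow, LinearMap.lTensor_tmul, lcoeff_apply, T_apply, rid_tmul,
    ite_smul, one_smul, zero_smul, Finset.sum_ite_eq']
  split_ifs with hm
  · rfl
  · rw [DFinsupp.notMem_support_iff.1 hm, ZeroMemClass.coe_zero]

end Gauge

/-- A two-sided ideal `I` of a `ℤ`-graded algebra is graded iff it is invariant under all
base-changed gauge automorphisms, i.e. each `ρ_R(z)` maps `I ⊗ 1` into the `R`-submodule
of `A ⊗[K] R` spanned by `{j ⊗ 1 : j ∈ I}` (equivalently, the `K`-span of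
`{j ⊗ r : j ∈ I, r ∈ R}`). -/
theorem graded_ideal_iff_gauge_invariant
    (K A : Type) [Field K] [Ring A] [Algebra K A]
    (𝒜 : ℤ → Submodule K A) [GradedRing 𝒜] (I : TwoSidedIdeal A) :
    (∀ a ∈ I, ∀ n : ℤ, (DirectSum.decompose 𝒜 a n : A) ∈ I) ↔
    (∀ (R : Type) [CommRing R] [Algebra K R],
      ∀ (z : Rˣ) (ρ : A ⊗[K] R →ₗ[K] A ⊗[K] R), IsGaugeMap 𝒜 z ρ →
        ∀ i ∈ I, ρ (i ⊗ₜ[K] (1 : R)) ∈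
          Submodule.span K {x : A ⊗[K] R | ∃ j ∈ I, ∃ r : R, x = j ⊗ₜ[K] r}) := by
  classical
  constructor
  · intro hI R _ _ z ρ hρ i hi
    rw [hρ.apply_tmul]
    exact Submodule.sum_mem _ fun n _ => Submodule.subset_span ⟨_, hI i hi n, _, rfl⟩
  · intro hI i hi m
    have hspan := hI _ (unitT K) _ (isGaugeMap_gaugeMap 𝒜 (unitT K)) i hi
    have hcoeff := rid_lTensor_mem_of_mem_span ((TwoSidedIdeal.asIdeal I).restrictScalars K)
      (lcoeff K m) hspan
    rwa [(isGaugeMap_gaugeMap 𝒜 _).rid_lcoeff_apply_tmul_one] at hcoeff
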